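/- Let (Ω, ℱ, P) be a probability space and let U : (0,∞) → ℝ be continuously differentiable, strictly increasing and strictly concave, with U'(0+) = +∞, U'(∞) = 0 and limsup_{x→∞} x U'(x)/U(x) < 1; extend U to 0 by U(0) = lim_{x↓0} U(x) ∈ [−∞, ∞). Let D be a convex set of nonnegative random variables such that E[U(W)] is well-defined in [−∞, +∞] for every W ∈ D, let α > 0 with U(α) > −∞, and suppose some V* ∈ D satisfies E[U(V*)] = sup_{W∈D} E[U(W)] < ∞. Then the set C = { V : V is a nonnegative random variable with V + α ∈ D } is bounded in probability. -/

import Mathlib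

/-!
Perturb the optimizer `V*` towards `W = V + α`: the mixture `X = (1 - 1/L) V* + W / L` lies in
`D`, so `E[L (U(X) - U(V*))] ≤ 0`. By concavity this difference quotient is bounded below by
`U(α) - U(V*)`, whose negative part is integrable and does not depend on `V`, and on the event
`{V* ≤ K, V + α ≥ V* + L}` it is at least `L (U(K+1) - U(K))`. Markov's inequality then bounds
the probability of that event by `E[(U(V*) - U(α))⁺] / (L (U(K+1) - U(K)))`; choose `K` with
`P(V* > K)` small and then `L` large. At `0` the utility is extended by its limit `U₀`, which is
concave when `U₀` is finite; when `U₀ = -∞`, finiteness of the optimum forces `V* > 0` a.s.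
-/

open MeasureTheory Set Filter Topology ENNReal

/-- The positive part of an extended real number, as an element of `ℝ≥0∞`. -/
noncomputable def erealPosPart (x : EReal) : ℝ≥0∞ :=
  if x = ⊤ then ⊤ else ENNReal.ofReal x.toReal

/-- The utility function `U : (0,∞) → ℝ` extended to `0` by the (possibly infinite)
value `U₀ ∈ [−∞, ∞)`. -/
noncomputable def utilAt (U : ℝ → ℝ) (U₀ : EReal) (x : ℝ) : EReal :=
  if x = 0 then U₀ else (U x : EReal)

/-- The expected utility `E[U(W)] ∈ [−∞, +∞]` of a nonnegative random variable `W`,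
defined as the difference of the integrals of the positive and negative parts. -/
noncomputable def expUtil {Ω : Type*} [MeasurableSpace Ω] (P : Measure Ω)
    (U : ℝ → ℝ) (U₀ : EReal) (W : Ω → ℝ) : EReal :=
  ((∫⁻ ω, erealPosPart (utilAt U U₀ (W ω)) ∂P : ℝ≥0∞) : EReal)
    - ((∫⁻ ω, erealPosPart (-(utilAt U U₀ (W ω))) ∂P : ℝ≥0∞) : EReal)

/-- `E[U(W)]` is well-defined in `[−∞, +∞]`: the positive part or the negative part of
`U(W)` has finite integral. -/
def ExpUtilWellDef {Ω : Type*} [MeasurableSpace Ω] (P : Measure Ω)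
    (U : ℝ → ℝ) (U₀ : EReal) (W : Ω → ℝ) : Prop :=
  (∫⁻ ω, erealPosPart (utilAt U U₀ (W ω)) ∂P) ≠ ⊤
    ∨ (∫⁻ ω, erealPosPart (-(utilAt U U₀ (W ω))) ∂P) ≠ ⊤

section Concave

variable {s : Set ℝ} {f : ℝ → ℝ}

lemma ConcaveOn.mul_sub_le_sub (hf : ConcaveOn ℝ s f) {v w t : ℝ} (hv : v ∈ s) (hw : w ∈ s)
    (ht₀ : 0 ≤ t) (ht₁ : t ≤ 1) : t * (f w - f v) ≤ f ((1 - t) * v + t * w) - f v := by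
  have := hf.2 hv hw (sub_nonneg.2 ht₁) ht₀ (by ring)
  simp only [smul_eq_mul] at this
  linarith

lemma ConcaveOn.sub_le_sub_of_le (hf : ConcaveOn ℝ s f) {v K h : ℝ} (hv : v ∈ s)
    (hKh : K + h ∈ s) (hvK : v ≤ K) (hh : 0 ≤ h) : f (K + h) - f K ≤ f (v + h) - f v := by
  rcases (add_nonneg (sub_nonneg.2 hvK) hh).eq_or_lt with hd | hd
  · obtain rfl : h = 0 := by linarith
    simp
  have hsum : h / (K - v + h) + (K - v) / (K - v + h) = 1 := by field_simp; ring
  -- `K` and `v + h` are the two convex combinations of `v` and `K + h` with swapped weights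
  have hK := hf.2 hv hKh (div_nonneg hh hd.le) (div_nonneg (sub_nonneg.2 hvK) hd.le) hsum
  have hvh := hf.2 hv hKh (div_nonneg (sub_nonneg.2 hvK) hd.le) (div_nonneg hh hd.le)
    ((add_comm _ _).trans hsum)
  simp only [smul_eq_mul] at hK hvh
  rw [show h / (K - v + h) * v + (K - v) / (K - v + h) * (K + h) = K by field_simp; ring] at hK
  rw [show (K - v) / (K - v + h) * v + h / (K - v + h) * (K + h) = v + h by
    field_simp; ring] at hvh
  linear_combination hK + hvh - (f v + f (K + h)) * hsum

lemma ConcaveOn.sub_le_sub_convexComb (hs : Convex ℝ s) (hf : ConcaveOn ℝ s f)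
    (hmono : MonotoneOn f s) {v w K L t : ℝ} (hv : v ∈ s) (hw : w ∈ s) (hKtL : K + t * L ∈ s)
    (hvK : v ≤ K) (hvw : v + L ≤ w) (hL : 0 ≤ L) (ht₀ : 0 ≤ t) (ht₁ : t ≤ 1) :
    f (K + t * L) - f K ≤ f ((1 - t) * v + t * w) - f v := by
  have htL : 0 ≤ t * L := mul_nonneg ht₀ hL
  have hvtL : v + t * L ∈ s :=
    hs.ordConnected.out hv hKtL ⟨le_add_of_nonneg_right htL, by linarith⟩
  have hcomb : (1 - t) * v + t * w ∈ s := by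
    simpa [smul_eq_mul] using hs hv hw (sub_nonneg.2 ht₁) ht₀ (by ring)
  have := hmono hvtL hcomb (by nlinarith)
  linarith [hf.sub_le_sub_of_le hv hKtL hvK htL]

end Concave

lemma ConcaveOn.of_tendsto {E ι : Type*} [AddCommGroup E] [Module ℝ E] {s : Set E}
    {f : E → ℝ} {F : ι → E → ℝ} {l : Filter ι} [l.NeBot] (hs : Convex ℝ s)
    (hF : ∀ᶠ i in l, ConcaveOn ℝ s (F i)) (hlim : ∀ x ∈ s, Tendsto (fun i => F i x) l (𝓝 (f x))) :
    ConcaveOn ℝ s f :=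
  ⟨hs, fun x hx y hy a b ha hb hab =>
    le_of_tendsto_of_tendsto (((hlim x hx).const_smul a).add ((hlim y hy).const_smul b))
      (hlim _ (hs hx hy ha hb hab)) (hF.mono fun _ hi => hi.2 hx hy ha hb hab)⟩

section Utility

variable {U : ℝ → ℝ} {U₀ : EReal}

lemma le_of_tendsto_nhdsGT_zero (hmono : MonotoneOn U (Ioi 0))
    (hU₀ : Tendsto (fun x => (U x : EReal)) (𝓝[>] 0) (𝓝 U₀)) {x : ℝ} (hx : 0 < x) :
    U₀ ≤ U x :=
  le_of_tendsto hU₀ <| by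
    filter_upwards [Ioo_mem_nhdsGT hx] with y hy
    exact EReal.coe_le_coe_iff.2 (hmono hy.1 hx hy.2.le)

lemma exists_concaveOn_utilAt_eq (hmono : StrictMonoOn U (Ioi 0))
    (hconc : ConcaveOn ℝ (Ioi 0) U) (hU₀ : Tendsto (fun x => (U x : EReal)) (𝓝[>] 0) (𝓝 U₀)) :
    ∃ (s : Set ℝ) (f : ℝ → ℝ), Convex ℝ s ∧ Ioi 0 ⊆ s ∧ ConcaveOn ℝ s f ∧ StrictMonoOn f s ∧
      (∀ x ∈ s, utilAt U U₀ x = f x) ∧ ∀ x, 0 ≤ x → x ∉ s → utilAt U U₀ x = ⊥ := by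
  induction U₀ using EReal.rec with
  | bot =>
    refine ⟨Ioi 0, U, convex_Ioi 0, subset_rfl, hconc, hmono, fun x hx => ?_, fun x hx hxs => ?_⟩
    · simp [utilAt, (mem_Ioi.1 hx).ne']
    · simp [utilAt, le_antisymm (not_lt.1 hxs) hx]
  | top => exact absurd (le_of_tendsto_nhdsGT_zero hmono.monotoneOn hU₀ one_pos) (by simp)
  | coe r =>
    have hr : Tendsto U (𝓝[>] 0) (𝓝 r) := EReal.tendsto_coe.1 hU₀
    refine ⟨Ici 0, fun x => if x = 0 then r else U x, convex_Ici 0, Ioi_subset_Ici_self,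
      ?_, ?_, fun x _ => by simp only [utilAt]; split_ifs <;> rfl,
      fun x hx hxs => absurd hx hxs⟩
    · refine ConcaveOn.of_tendsto (F := fun ε x => U (ε + x)) (l := 𝓝[>] 0) (convex_Ici 0) ?_ ?_
      · filter_upwards [self_mem_nhdsWithin] with ε hε
        exact (hconc.translate_right ε).subset
          (fun x hx => show 0 < ε + x by linarith [mem_Ioi.1 hε, mem_Ici.1 hx]) (convex_Ici 0)
      · intro x hx
        rcases (mem_Ici.1 hx).eq_or_lt with rfl | hx
        · simpa using hr
        · have hcont := (hconc.continuousOn isOpen_Ioi).continuousAt (Ioi_mem_nhds hx)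
          simp only [if_neg hx.ne']
          refine hcont.tendsto.comp ?_
          exact ((continuous_add_const x).tendsto' 0 x (zero_add x)).mono_left
            nhdsWithin_le_nhds
    · intro x hx y _ hxy
      rcases (mem_Ici.1 hx).eq_or_lt with rfl | hx
      · have hr_le := le_of_tendsto_nhdsGT_zero hmono.monotoneOn hU₀ (half_pos hxy)
        simpa [hxy.ne'] using (EReal.coe_le_coe_iff.1 hr_le).trans_lt
          (hmono (half_pos hxy) hxy (half_lt_self hxy))
      · simpa [hx.ne', (hx.trans hxy).ne'] using hmono hx (hx.trans hxy) hxy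

end Utility

section Integration

variable {Ω : Type*} [MeasurableSpace Ω] {μ : Measure Ω}

lemma integrable_and_coe_integral_of_lintegral_ofReal_sub {g : Ω → ℝ} (hg : AEMeasurable g μ)
    (htop : ((∫⁻ ω, ENNReal.ofReal (g ω) ∂μ : ℝ≥0∞) : EReal)
      - ((∫⁻ ω, ENNReal.ofReal (-g ω) ∂μ : ℝ≥0∞) : EReal) ≠ ⊤)
    (hbot : ((∫⁻ ω, ENNReal.ofReal (g ω) ∂μ : ℝ≥0∞) : EReal)
      - ((∫⁻ ω, ENNReal.ofReal (-g ω) ∂μ : ℝ≥0∞) : EReal) ≠ ⊥) :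
    Integrable g μ ∧ ((∫⁻ ω, ENNReal.ofReal (g ω) ∂μ : ℝ≥0∞) : EReal)
      - ((∫⁻ ω, ENNReal.ofReal (-g ω) ∂μ : ℝ≥0∞) : EReal) = ∫ ω, g ω ∂μ := by
  have hneg : ∫⁻ ω, ENNReal.ofReal (-g ω) ∂μ ≠ ⊤ := fun h => hbot (by simp [h])
  have hpos : ∫⁻ ω, ENNReal.ofReal (g ω) ∂μ ≠ ⊤ := fun h =>
    htop (by rw [h, EReal.coe_ennreal_top, EReal.top_sub (by simpa using hneg)])
  have hint : Integrable g μ := by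
    have hmax (x : ℝ) : ENNReal.ofReal (max x 0) = ENNReal.ofReal x := by simp
    have hpart : ∀ h : Ω → ℝ, AEMeasurable h μ → ∫⁻ ω, ENNReal.ofReal (h ω) ∂μ ≠ ⊤ →
        Integrable (fun ω => max (h ω) 0) μ := fun h hh hfin =>
      (lintegral_ofReal_ne_top_iff_integrable (f := fun ω => max (h ω) 0)
        (hh.max aemeasurable_const).aestronglyMeasurable
        (ae_of_all _ fun _ => le_max_right _ _)).1 (by simpa only [hmax] using hfin)
    exact ((hpart g hg hpos).sub (hpart (fun ω => -g ω) hg.neg hneg)).congr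
      (ae_of_all _ fun ω => max_zero_sub_max_neg_zero_eq_self (g ω))
  refine ⟨hint, ?_⟩
  rw [integral_eq_lintegral_pos_part_sub_lintegral_neg_part hint, EReal.coe_sub,
    EReal.coe_ennreal_toReal hpos, EReal.coe_ennreal_toReal hneg]

lemma lintegral_ofReal_neg_ne_top_of_le [IsFiniteMeasure μ] {g : Ω → ℝ} {c : ℝ}
    (hc : ∀ ω, c ≤ g ω) : ∫⁻ ω, ENNReal.ofReal (-g ω) ∂μ ≠ ⊤ :=
  ne_top_of_le_ne_top (by simp [ENNReal.mul_ne_top, measure_ne_top])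
    (lintegral_mono fun ω => ENNReal.ofReal_le_ofReal (neg_le_neg (hc ω)) :
      _ ≤ ∫⁻ _, ENNReal.ofReal (-c) ∂μ)

lemma MonotoneOn.aemeasurable_comp {s : Set ℝ} {f : ℝ → ℝ} (hf : MonotoneOn f s)
    (hs : MeasurableSet s) {X : Ω → ℝ} (hX : Measurable X) (hXs : ∀ᵐ ω ∂μ, X ω ∈ s) :
    AEMeasurable (fun ω => f (X ω)) μ := by
  have hf' : AEMeasurable f ((μ.map X).restrict s) := aemeasurable_restrict_of_monotoneOn hs hf
  rw [Measure.restrict_eq_self_of_ae_mem ((ae_map_iff hX.aemeasurable hs).2 hXs)] at hf'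
  exact hf'.comp_measurable hX

lemma tendsto_measure_lt_atTop [IsFiniteMeasure μ] {X : Ω → ℝ} (hX : Measurable X) :
    Tendsto (fun K : ℝ => μ {ω | K < X ω}) atTop (𝓝 0) := by
  have h := tendsto_measure_iInter_atTop (μ := μ) (s := fun K : ℝ => {ω | K < X ω})
    (fun K => (measurableSet_lt measurable_const hX).nullMeasurableSet)
    (fun K L hKL ω hω => hKL.trans_lt hω) ⟨0, measure_ne_top μ _⟩
  rwa [iInter_eq_empty_iff.2 fun ω => ⟨X ω, lt_irrefl (X ω)⟩, measure_empty] at h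

lemma mul_measureReal_le_integral_of_concaveOn [IsFiniteMeasure μ] {s : Set ℝ} {f : ℝ → ℝ}
    (hs : Convex ℝ s) (hf : ConcaveOn ℝ s f)
    (hmono : MonotoneOn f s) {X W : Ω → ℝ} (hXs : ∀ᵐ ω ∂μ, X ω ∈ s) (hWs : ∀ ω, W ω ∈ s)
    {a : ℝ} (ha : a ∈ s) (haW : ∀ ω, a ≤ W ω) {K L : ℝ} (hK : K ∈ s) (hK1 : K + 1 ∈ s)
    (hL : 1 ≤ L) (hX : Integrable (fun ω => f (X ω)) μ)
    (hXW : Integrable (fun ω => f ((1 - L⁻¹) * X ω + L⁻¹ * W ω)) μ)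
    (hle : ∫ ω, f ((1 - L⁻¹) * X ω + L⁻¹ * W ω) ∂μ ≤ ∫ ω, f (X ω) ∂μ) :
    L * (f (K + 1) - f K) * μ.real {ω | X ω ≤ K ∧ X ω + L ≤ W ω}
      ≤ ∫ ω, max (f (X ω) - f a) 0 ∂μ := by
  have hL0 : 0 < L := one_pos.trans_le hL
  have ht₀ : 0 ≤ L⁻¹ := inv_nonneg.2 hL0.le
  have ht₁ : L⁻¹ ≤ 1 := inv_le_one_of_one_le₀ hL
  have hLt : L⁻¹ * L = 1 := inv_mul_cancel₀ hL0.ne'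
  set F : Ω → ℝ := fun ω =>
    L * (f ((1 - L⁻¹) * X ω + L⁻¹ * W ω) - f (X ω)) + max (f (X ω) - f a) 0
  have hF : Integrable F μ :=
    ((hXW.sub hX).const_mul L).add (hX.sub (integrable_const _)).pos_part
  have hF₀ : 0 ≤ᵐ[μ] F := by
    filter_upwards [hXs] with ω hω
    have hchord := mul_le_mul_of_nonneg_left (hf.mul_sub_le_sub hω (hWs ω) ht₀ ht₁) hL0.le
    rw [← mul_assoc, mul_inv_cancel₀ hL0.ne', one_mul] at hchord
    have := hmono ha (hWs ω) (haW ω)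
    simp only [F, Pi.zero_apply]
    linarith [le_max_left (f (X ω) - f a) 0]
  have hS : {ω | X ω ≤ K ∧ X ω + L ≤ W ω} ≤ᵐ[μ] {ω | L * (f (K + 1) - f K) ≤ F ω} := by
    filter_upwards [hXs] with ω hω ⟨hXK, hXWL⟩
    have hinc := hf.sub_le_sub_convexComb hs hmono hω (hWs ω) (by rwa [hLt]) hXK hXWL hL0.le
      ht₀ ht₁
    rw [hLt] at hinc
    show L * (f (K + 1) - f K) ≤ F ω
    linarith [mul_le_mul_of_nonneg_left hinc hL0.le, le_max_right (f (X ω) - f a) 0]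
  have hδ : 0 ≤ L * (f (K + 1) - f K) :=
    mul_nonneg hL0.le (sub_nonneg.2 (hmono hK hK1 (by linarith)))
  calc L * (f (K + 1) - f K) * μ.real {ω | X ω ≤ K ∧ X ω + L ≤ W ω}
      ≤ L * (f (K + 1) - f K) * μ.real {ω | L * (f (K + 1) - f K) ≤ F ω} :=
        mul_le_mul_of_nonneg_left
          (ENNReal.toReal_mono (measure_ne_top μ _) (measure_mono_ae hS)) hδ
    _ ≤ ∫ ω, F ω ∂μ := mul_meas_ge_le_integral_of_nonneg hF₀ hF _
    _ = L * (∫ ω, f ((1 - L⁻¹) * X ω + L⁻¹ * W ω) ∂μ - ∫ ω, f (X ω) ∂μ)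
          + ∫ ω, max (f (X ω) - f a) 0 ∂μ := by
        rw [integral_add (by exact (hXW.sub hX).const_mul L)
          (by exact (hX.sub (integrable_const _)).pos_part), integral_const_mul,
          integral_sub hXW hX]
    _ ≤ ∫ ω, max (f (X ω) - f a) 0 ∂μ := by nlinarith

lemma measure_setOf_add_le_abs_le {V X : Ω → ℝ} {K L α : ℝ} (hV : ∀ ω, 0 ≤ V ω) (hα : 0 ≤ α) :
    μ {ω | K + L ≤ |V ω|} ≤ μ {ω | X ω ≤ K ∧ X ω + L ≤ V ω + α} + μ {ω | K < X ω} := by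
  refine (measure_mono fun ω hω => ?_).trans (measure_union_le _ _)
  have hVω : K + L ≤ V ω := by simpa [abs_of_nonneg (hV ω)] using hω
  by_cases hXK : X ω ≤ K
  · exact Or.inl ⟨hXK, by linarith⟩
  · exact Or.inr (not_le.1 hXK)

end Integration

section ExpectedUtility

variable {Ω : Type*} [MeasurableSpace Ω] {μ : Measure Ω} {U : ℝ → ℝ} {U₀ : EReal}
  {s : Set ℝ} {f : ℝ → ℝ} {W : Ω → ℝ}

@[simp]
lemma erealPosPart_coe (x : ℝ) : erealPosPart x = ENNReal.ofReal x := by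
  simp [erealPosPart]

lemma expUtil_eq_of_ae_mem (hutil : ∀ x ∈ s, utilAt U U₀ x = f x) (hWs : ∀ᵐ ω ∂μ, W ω ∈ s) :
    expUtil μ U U₀ W = ((∫⁻ ω, ENNReal.ofReal (f (W ω)) ∂μ : ℝ≥0∞) : EReal)
      - ((∫⁻ ω, ENNReal.ofReal (-f (W ω)) ∂μ : ℝ≥0∞) : EReal) := by
  unfold expUtil
  congr 2 <;> refine lintegral_congr_ae (hWs.mono fun ω hω => ?_) <;>
    simp [hutil _ hω, ← EReal.coe_neg]

lemma integrable_and_expUtil_eq (hutil : ∀ x ∈ s, utilAt U U₀ x = f x)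
    (hmono : MonotoneOn f s) (hs : MeasurableSet s) (hW : Measurable W)
    (hWs : ∀ᵐ ω ∂μ, W ω ∈ s) (htop : expUtil μ U U₀ W ≠ ⊤) (hbot : expUtil μ U U₀ W ≠ ⊥) :
    Integrable (fun ω => f (W ω)) μ ∧ expUtil μ U U₀ W = ∫ ω, f (W ω) ∂μ := by
  rw [expUtil_eq_of_ae_mem hutil hWs] at htop hbot ⊢
  exact integrable_and_coe_integral_of_lintegral_ofReal_sub (hmono.aemeasurable_comp hs hW hWs)
    htop hbot

lemma expUtil_ne_bot_of_le [IsFiniteMeasure μ] (hutil : ∀ x ∈ s, utilAt U U₀ x = f x)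
    (hs0 : Ioi 0 ⊆ s) (hmono : MonotoneOn f s) {a : ℝ} (ha : 0 < a) (haW : ∀ ω, a ≤ W ω) :
    expUtil μ U U₀ W ≠ ⊥ := by
  have hWs ω : W ω ∈ s := hs0 (ha.trans_le (haW ω))
  rw [expUtil_eq_of_ae_mem hutil (ae_of_all _ hWs), sub_eq_add_neg]
  refine EReal.add_ne_bot_iff.2 ⟨EReal.coe_ennreal_ne_bot _, ?_⟩
  rw [Ne, EReal.neg_eq_bot_iff, EReal.coe_ennreal_eq_top_iff]
  exact lintegral_ofReal_neg_ne_top_of_le fun ω => hmono (hs0 ha) (hWs ω) (haW ω)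

lemma ae_mem_of_expUtil_ne_bot (hbot : ∀ x, 0 ≤ x → x ∉ s → utilAt U U₀ x = ⊥)
    (hs : MeasurableSet s) (hW : Measurable W) (hW0 : ∀ ω, 0 ≤ W ω)
    (hne : expUtil μ U U₀ W ≠ ⊥) : ∀ᵐ ω ∂μ, W ω ∈ s := by
  have hneg : ∫⁻ ω, erealPosPart (-utilAt U U₀ (W ω)) ∂μ ≠ ⊤ := fun h =>
    hne (by simp [expUtil, h])
  rw [ae_iff]
  by_contra hpos
  refine hneg (top_le_iff.1 ?_)
  calc ⊤ = ∫⁻ ω, (W ⁻¹' sᶜ).indicator (fun _ => ⊤) ω ∂μ := by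
        rw [lintegral_indicator_const (hW hs.compl)]
        exact (ENNReal.top_mul hpos).symm
    _ ≤ _ := lintegral_mono fun ω => by
        by_cases hω : W ω ∈ s
        · simp [hω]
        · simp [hω, hbot _ (hW0 ω) hω, erealPosPart]

lemma mul_measureReal_le_integral_of_isMaxOn_expUtil [IsFiniteMeasure μ] (hs : Convex ℝ s)
    (hs0 : Ioi 0 ⊆ s) (hf : ConcaveOn ℝ s f) (hmono : MonotoneOn f s)
    (hutil : ∀ x ∈ s, utilAt U U₀ x = f x) (hbot : ∀ x, 0 ≤ x → x ∉ s → utilAt U U₀ x = ⊥)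
    {D : Set (Ω → ℝ)} (hD : Convex ℝ D) (hDmeas : ∀ W ∈ D, Measurable W)
    (hDnonneg : ∀ W ∈ D, ∀ ω, 0 ≤ W ω) {Vstar : Ω → ℝ} (hVD : Vstar ∈ D)
    (hopt : IsMaxOn (expUtil μ U U₀) D Vstar) (hfin : expUtil μ U U₀ Vstar ≠ ⊤) (hWD : W ∈ D)
    {α : ℝ} (hα : 0 < α) (hαW : ∀ ω, α ≤ W ω) {K L : ℝ} (hK : 0 < K) (hL : 1 ≤ L) :
    L * (f (K + 1) - f K) * μ.real {ω | Vstar ω ≤ K ∧ Vstar ω + L ≤ W ω}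
      ≤ ∫ ω, max (f (Vstar ω) - f α) 0 ∂μ := by
  have hsm : MeasurableSet s := hs.ordConnected.measurableSet
  have ht₀ : 0 < L⁻¹ := inv_pos.2 (one_pos.trans_le hL)
  set X : Ω → ℝ := fun ω => (1 - L⁻¹) * Vstar ω + L⁻¹ * W ω
  have hXD : X ∈ D := by
    convert hD hVD hWD (sub_nonneg.2 (inv_le_one_of_one_le₀ hL)) ht₀.le (by ring) using 1
    ext ω
    simp [X]
  have hXα ω : L⁻¹ * α ≤ X ω := by
    have := mul_nonneg (sub_nonneg.2 (inv_le_one_of_one_le₀ hL)) (hDnonneg _ hVD ω)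
    nlinarith [mul_le_mul_of_nonneg_left (hαW ω) ht₀.le]
  have hXopt := isMaxOn_iff.1 hopt _ hXD
  have hXbot : expUtil μ U U₀ X ≠ ⊥ := expUtil_ne_bot_of_le hutil hs0 hmono (by positivity) hXα
  have hX := integrable_and_expUtil_eq hutil hmono hsm (hDmeas _ hXD)
    (ae_of_all _ fun ω => hs0 ((mul_pos ht₀ hα).trans_le (hXα ω)))
    (ne_top_of_le_ne_top hfin hXopt) hXbot
  have hVbot : expUtil μ U U₀ Vstar ≠ ⊥ := ne_bot_of_le_ne_bot hXbot hXopt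
  have hVs := ae_mem_of_expUtil_ne_bot hbot hsm (hDmeas _ hVD) (hDnonneg _ hVD) hVbot
  have hV := integrable_and_expUtil_eq hutil hmono hsm (hDmeas _ hVD) hVs hfin hVbot
  refine mul_measureReal_le_integral_of_concaveOn hs hf hmono hVs
    (fun ω => hs0 (hα.trans_le (hαW ω))) (hs0 hα) hαW (hs0 hK) (hs0 (mem_Ioi.2 (by linarith)))
    hL hV.1 hX.1 ?_
  exact_mod_cast hX.2 ▸ hV.2 ▸ hXopt

end ExpectedUtility

theorem bounded_in_probability_of_optimizer_general
    {Ω : Type*} [MeasurableSpace Ω] (P : Measure Ω) [IsProbabilityMeasure P]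
    (U : ℝ → ℝ) (U₀ : EReal)
    (hmono : StrictMonoOn U (Set.Ioi 0))
    (hconc : StrictConcaveOn ℝ (Set.Ioi 0) U)
    (hU₀ : Tendsto (fun x : ℝ => (U x : EReal)) (nhdsWithin 0 (Set.Ioi 0)) (nhds U₀))
    (D : Set (Ω → ℝ)) (hD : Convex ℝ D)
    (hDmeas : ∀ W ∈ D, Measurable W) (hDnonneg : ∀ W ∈ D, ∀ ω, 0 ≤ W ω)
    (α : ℝ) (hα : 0 < α)
    (Vstar : Ω → ℝ) (hVD : Vstar ∈ D)
    (hopt : expUtil P U U₀ Vstar = ⨆ W ∈ D, expUtil P U U₀ W)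
    (hfin : expUtil P U U₀ Vstar ≠ ⊤) :
    ∀ ε : ℝ, 0 < ε → ∃ M : ℝ, 0 < M ∧
      ∀ V : Ω → ℝ, (∀ ω, 0 ≤ V ω) → (fun ω => V ω + α) ∈ D →
        P {ω | M ≤ |V ω|} ≤ ENNReal.ofReal ε := by
  obtain ⟨s, f, hs, hs0, hf, hfmono, hutil, hbot⟩ :=
    exists_concaveOn_utilAt_eq hmono hconc.concaveOn hU₀
  intro ε hε
  obtain ⟨K, hPK, hK⟩ : ∃ K, P {ω | K < Vstar ω} ≤ ENNReal.ofReal (ε / 2) ∧ 0 < K :=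
    (((tendsto_measure_lt_atTop (hDmeas _ hVD)).eventually
      (ge_mem_nhds (ENNReal.ofReal_pos.2 (half_pos hε)))).and (eventually_gt_atTop 0)).exists
  have hδ : 0 < f (K + 1) - f K :=
    sub_pos.2 (hfmono (hs0 hK) (hs0 (mem_Ioi.2 (by linarith))) (by linarith))
  obtain ⟨L, hLc, hL⟩ : ∃ L, ∫ ω, max (f (Vstar ω) - f α) 0 ∂P ≤ L * (f (K + 1) - f K) * (ε / 2)
      ∧ 1 ≤ L :=
    ((((tendsto_id.atTop_mul_const hδ).atTop_mul_const (half_pos hε)).eventually_ge_atTop _).and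
      (eventually_ge_atTop 1)).exists
  refine ⟨K + L, by linarith, fun V hV hVD' => ?_⟩
  have hS := mul_measureReal_le_integral_of_isMaxOn_expUtil hs hs0 hf hfmono.monotoneOn hutil
    hbot hD hDmeas hDnonneg hVD (isMaxOn_iff.2 fun W hW => hopt ▸ le_biSup _ hW) hfin hVD' hα
    (fun ω => le_add_of_nonneg_left (hV ω)) hK hL
  calc P {ω | K + L ≤ |V ω|}
      ≤ P {ω | Vstar ω ≤ K ∧ Vstar ω + L ≤ V ω + α} + P {ω | K < Vstar ω} :=
        measure_setOf_add_le_abs_le hV hα.le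
    _ ≤ ENNReal.ofReal (ε / 2) + ENNReal.ofReal (ε / 2) := by
        refine add_le_add ?_ hPK
        rw [← ofReal_measureReal]
        exact ENNReal.ofReal_le_ofReal (le_of_mul_le_mul_left (hS.trans hLc) (by positivity))
    _ = ENNReal.ofReal ε := by rw [← ENNReal.ofReal_add (by positivity) (by positivity), add_halves]

/-- Let `U : (0,∞) → ℝ` be continuously differentiable, strictly
increasing and strictly concave, with `U'(0+) = +∞`, `U'(∞) = 0` and
`limsup_{x→∞} x U'(x)/U(x) < 1`; extend `U` to `0` by `U(0) = lim_{x↓0} U(x) ∈ [−∞, ∞)`.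
Let `D` be a convex set of nonnegative random variables with well-defined expected
utilities, let `α > 0` with `U(α) > −∞`, and suppose some `V* ∈ D` satisfies
`E[U(V*)] = sup_{W ∈ D} E[U(W)] < ∞`. Then the set
`C = { V : V nonnegative random variable with V + α ∈ D }` is bounded in probability. -/
theorem bounded_in_probability_of_optimizer
    {Ω : Type*} [MeasurableSpace Ω] (P : Measure Ω) [IsProbabilityMeasure P]
    (U U' : ℝ → ℝ) (U₀ : EReal)
    (hderiv : ∀ x ∈ Set.Ioi (0 : ℝ), HasDerivAt U (U' x) x)
    (hU'cont : ContinuousOn U' (Set.Ioi 0))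
    (hmono : StrictMonoOn U (Set.Ioi 0))
    (hconc : StrictConcaveOn ℝ (Set.Ioi 0) U)
    (hInada₀ : Tendsto U' (nhdsWithin 0 (Set.Ioi 0)) atTop)
    (hInadaTop : Tendsto U' atTop (nhds 0))
    (hRAE : Filter.limsup (fun x : ℝ => x * U' x / U x) atTop < 1)
    (hU₀ : Tendsto (fun x : ℝ => (U x : EReal)) (nhdsWithin 0 (Set.Ioi 0)) (nhds U₀))
    (hU₀ne : U₀ ≠ ⊤)
    (D : Set (Ω → ℝ)) (hD : Convex ℝ D)
    (hDmeas : ∀ W ∈ D, Measurable W) (hDnonneg : ∀ W ∈ D, ∀ ω, 0 ≤ W ω)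
    (hDwd : ∀ W ∈ D, ExpUtilWellDef P U U₀ W)
    (α : ℝ) (hα : 0 < α)
    (Vstar : Ω → ℝ) (hVD : Vstar ∈ D)
    (hopt : expUtil P U U₀ Vstar = ⨆ W ∈ D, expUtil P U U₀ W)
    (hfin : expUtil P U U₀ Vstar ≠ ⊤) :
    ∀ ε : ℝ, 0 < ε → ∃ M : ℝ, 0 < M ∧
      ∀ V : Ω → ℝ, (∀ ω, 0 ≤ V ω) → (fun ω => V ω + α) ∈ D →
        P {ω | M ≤ |V ω|} ≤ ENNReal.ofReal ε :=
  bounded_in_probability_of_optimizer_general P U U₀ hmono hconc hU₀ D hD hDmeas hDnonneg α hα Vstar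
    hVD hopt hfin
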